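/- The coefficient of s^k in J(G, 0, 1, 0, 0, s, 1) equals the number of spanning subgraphs H of G with exactly k connected components such that in each connected component the number of edges equals the number of vertices (k-components spanning functional subgraphs). -/

import Mathlib

/-- A finite multigraph with loops: vertices and edges are labeled by
naturals, and `φ` assigns to each edge label its unordered pair of
endpoints. -/
structure MG where
  V : Finset ℕ
  E : Finset ℕ
  φ : ℕ → Sym2 ℕ

namespace MG

noncomputable section
open scoped Classical
open Finset

/-- Well-formed: endpoints of edges lie in the vertex set. -/
def WF (G : MG) : Prop := ∀ e ∈ G.E, ∀ x ∈ G.φ e, x ∈ G.V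

/-- Simple: no loops and no parallel edges, and well-formed. -/
def Simple (G : MG) : Prop :=
  G.WF ∧ (∀ e ∈ G.E, ¬ (G.φ e).IsDiag) ∧
    ∀ e ∈ G.E, ∀ e' ∈ G.E, G.φ e = G.φ e' → e = e'

/-- Degree of a vertex (loops count twice). -/
def deg (G : MG) (v : ℕ) : ℕ :=
  ∑ e ∈ G.E, ((if v ∈ G.φ e then 1 else 0) + (if G.φ e = Sym2.diag v then 1 else 0))

/-- Adjacency by some edge. -/
def Adj (G : MG) (x y : ℕ) : Prop := ∃ e ∈ G.E, G.φ e = s(x, y)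

/-- Reachability. -/
def Reach (G : MG) : ℕ → ℕ → Prop := Relation.ReflTransGen G.Adj

/-- The connected component of `v` (as a set of vertices). -/
def comp (G : MG) (v : ℕ) : Finset ℕ := G.V.filter (fun w => G.Reach v w)

/-- Number of connected components. -/
def k (G : MG) : ℕ := (G.V.image G.comp).card

/-- The subgraph determined by a pair (vertex set, edge set). -/
def sub (G : MG) (p : Finset ℕ × Finset ℕ) : MG := ⟨p.1, p.2, G.φ⟩

/-- All subgraphs of `G`, encoded as (vertex set, edge set) pairs. -/
def subPairs (G : MG) : Finset (Finset ℕ × Finset ℕ) :=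
  (G.V.powerset ×ˢ G.E.powerset).filter (fun p => ∀ e ∈ p.2, ∀ x ∈ G.φ e, x ∈ p.1)

/-- Edge deletion. -/
def delE (G : MG) (e : ℕ) : MG := ⟨G.V, G.E.erase e, G.φ⟩

/-- Vertex deletion (with all incident edges). -/
def delV (G : MG) (u : ℕ) : MG :=
  ⟨G.V.erase u, G.E.filter (fun e => u ∉ G.φ e), G.φ⟩

/-- Contraction of the edge `e` with endpoints `u`, `v`: delete `e`,
merge `u` into `v`. -/
def contract (G : MG) (e u v : ℕ) : MG :=
  ⟨G.V.erase u, G.E.erase e,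
    fun e' => Sym2.map (fun x => if x = u then v else x) (G.φ e')⟩

/-- Disjoint union (sensible when the vertex and edge label sets are disjoint). -/
def disjUnion (G H : MG) : MG :=
  ⟨G.V ∪ H.V, G.E ∪ H.E, fun e => if e ∈ G.E then G.φ e else H.φ e⟩

/-- One vertex with `n` loops. -/
def K1 (n : ℕ) : MG := ⟨{0}, Finset.range n, fun _ => Sym2.diag 0⟩

/-- The empty graph. -/
def emp : MG := ⟨∅, ∅, fun _ => Sym2.diag 0⟩

/-- Number of Hamiltonian cycles: connected spanning subgraphs with all
degrees 2. -/
def h (G : MG) : ℕ :=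
  ((G.subPairs).filter (fun p =>
    p.1 = G.V ∧ (G.sub p).k = 1 ∧ ∀ v ∈ p.1, (G.sub p).deg v = 2)).card

/-- Number of 2-factors with exactly `k₀` components. -/
def hk (G : MG) (k₀ : ℕ) : ℕ :=
  ((G.subPairs).filter (fun p =>
    p.1 = G.V ∧ (G.sub p).k = k₀ ∧ ∀ v ∈ p.1, (G.sub p).deg v = 2)).card

/-- Number of subgraphs with `k₀` components and `l` edges in which every
vertex has degree 2. -/
def ckl (G : MG) (k₀ l : ℕ) : ℕ :=
  ((G.subPairs).filter (fun p =>
    (G.sub p).k = k₀ ∧ p.2.card = l ∧ ∀ v ∈ p.1, (G.sub p).deg v = 2)).card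

/-- Number of `j`-matchings: subgraphs with `2j` vertices, all of degree 1. -/
def m (G : MG) (j : ℕ) : ℕ :=
  ((G.subPairs).filter (fun p =>
    p.1.card = 2 * j ∧ ∀ v ∈ p.1, (G.sub p).deg v = 1)).card

/-- Isomorphism of multigraphs. -/
def Iso (G H : MG) : Prop :=
  ∃ f g : ℕ → ℕ, Set.BijOn f ↑G.V ↑H.V ∧ Set.BijOn g ↑G.E ↑H.E ∧
    ∀ e ∈ G.E, H.φ (g e) = Sym2.map f (G.φ e)

end
end MG

namespace MG
noncomputable section
open scoped Classical

/-- The edges of `H` with both endpoints in `C`. -/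
def edgesWithin (H : MG) (C : Finset ℕ) : Finset ℕ :=
  H.E.filter (fun e => ∀ x ∈ H.φ e, x ∈ C)

/-- The number of spanning subgraphs of `G` with exactly `k₀` connected
components in each of which the number of edges equals the number of
vertices (k-components spanning functional subgraphs). -/
def funcCount (G : MG) (k₀ : ℕ) : ℕ :=
  ((G.subPairs).filter (fun p =>
    p.1 = G.V ∧ (G.sub p).k = k₀ ∧
      ∀ v ∈ p.1,
        ((G.sub p).edgesWithin ((G.sub p).comp v)).card = ((G.sub p).comp v).card)).card

/-- The number of subgraphs of `G` with exactly `k₀` connected components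
and `l` edges in each of whose components #edges ≤ #vertices. -/
def subFuncCount (G : MG) (k₀ l : ℕ) : ℕ :=
  ((G.subPairs).filter (fun p =>
    (G.sub p).k = k₀ ∧ p.2.card = l ∧
      ∀ v ∈ p.1,
        ((G.sub p).edgesWithin ((G.sub p).comp v)).card ≤ ((G.sub p).comp v).card)).card

end
end MG

/-!
Both sides satisfy deletion–contraction on a non-loop edge `e = uv`. A spanning functional
subgraph either avoids `e`, and is then one of `G − e`, or contains it; contracting `e` then
removes one vertex and one edge from a single component and keeps the number of components,
which is a bijection onto the spanning functional subgraphs of `G / e`. Induction on the number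
of edges thus reduces to graphs whose edges are all loops: there `F` is `∏ᵥ (#loops at v) · s`
by multiplicativity, and a spanning functional subgraph is a choice of one loop at every vertex.
-/

open Finset in
theorem Finset.filter_image_pi_eq_singleton {α β : Type*} [DecidableEq α] [DecidableEq β]
    {s : Finset α} {t : Finset β} {f : α → β} {g : (b : β) → b ∈ t → α}
    (hg : g ∈ t.pi fun b => s.filter (f · = b)) {b : β} (hb : b ∈ t) :
    (t.attach.image fun c => g c.1 c.2).filter (f · = b) = {g b hb} := by
  have hgf : ∀ c (hc : c ∈ t), f (g c hc) = c := fun c hc =>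
    (mem_filter.1 (mem_pi.1 hg c hc)).2
  ext a
  simp only [mem_filter, mem_image, mem_attach, true_and, Subtype.exists, mem_singleton]
  constructor
  · rintro ⟨⟨c, hc, rfl⟩, rfl⟩
    simp only [hgf]
  · rintro rfl
    exact ⟨⟨b, hb, rfl⟩, hgf b hb⟩

open Finset in
theorem Finset.card_transversals {α β : Type*} [DecidableEq α] [DecidableEq β]
    {s : Finset α} {t : Finset β} {f : α → β} (hf : ∀ a ∈ s, f a ∈ t) :
    #(s.powerset.filter fun S => ∀ b ∈ t, #(S.filter (f · = b)) = 1) =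
      ∏ b ∈ t, #(s.filter (f · = b)) := by
  rw [← card_pi]
  symm
  refine card_bij (fun g _ => t.attach.image fun c => g c.1 c.2) (fun g hg => ?_) ?_ ?_
  · refine mem_filter.2 ⟨mem_powerset.2 fun a ha => ?_,
      fun b hb => by rw [filter_image_pi_eq_singleton hg hb, card_singleton]⟩
    obtain ⟨⟨c, hc⟩, -, rfl⟩ := mem_image.1 ha
    exact (mem_filter.1 (mem_pi.1 hg c hc)).1
  · intro g₁ hg₁ g₂ hg₂ himg
    funext b hb
    have h := filter_image_pi_eq_singleton hg₁ hb
    rwa [himg, filter_image_pi_eq_singleton hg₂ hb, singleton_inj, eq_comm] at h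
  · intro S hS
    obtain ⟨hSs, hS1⟩ := mem_filter.1 hS
    choose g hg using fun b hb => card_eq_one.1 (hS1 b hb)
    have hgS : ∀ b hb, g b hb ∈ S ∧ f (g b hb) = b := fun b hb =>
      mem_filter.1 ((hg b hb).symm ▸ mem_singleton_self _)
    refine ⟨g, mem_pi.2 fun b hb =>
      mem_filter.2 ⟨mem_powerset.1 hSs (hgS b hb).1, (hgS b hb).2⟩, ?_⟩
    ext a
    simp only [mem_image, mem_attach, true_and, Subtype.exists]
    refine ⟨fun ⟨b, hb, hab⟩ => hab ▸ (hgS b hb).1, fun ha => ?_⟩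
    have hfa := hf a (mem_powerset.1 hSs ha)
    have : a ∈ S.filter (f · = f a) := mem_filter.2 ⟨ha, rfl⟩
    rw [hg _ hfa, mem_singleton] at this
    exact ⟨f a, hfa, this.symm⟩

namespace MG

open scoped Classical
open Finset Polynomial

variable {G H : MG}

lemma Adj.symm {x y : ℕ} (h : G.Adj x y) : G.Adj y x := by
  obtain ⟨e, he, hφ⟩ := h
  exact ⟨e, he, hφ.trans Sym2.eq_swap⟩

lemma Reach.symm {x y : ℕ} (h : G.Reach x y) : G.Reach y x := by
  induction h with
  | refl => exact .refl
  | tail _ hab ih => exact ih.head hab.symm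

lemma Reach.trans {x y z : ℕ} (hxy : G.Reach x y) (hyz : G.Reach y z) : G.Reach x z :=
  Relation.ReflTransGen.trans hxy hyz

lemma Adj.reach {x y : ℕ} (h : G.Adj x y) : G.Reach x y := .single h

lemma mem_comp {v w : ℕ} : w ∈ G.comp v ↔ w ∈ G.V ∧ G.Reach v w := mem_filter

lemma comp_eq_of_reach {x y : ℕ} (h : G.Reach x y) : G.comp x = G.comp y := by
  ext w
  simp only [mem_comp]
  exact and_congr_right fun _ => ⟨h.symm.trans, h.trans⟩

lemma mem_comp_iff_of_reach {u v w : ℕ} (hu : u ∈ G.V) (hv : v ∈ G.V) (h : G.Reach u v) :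
    u ∈ G.comp w ↔ v ∈ G.comp w := by
  simp only [mem_comp, hu, hv, true_and]
  exact ⟨(·.trans h), (·.trans h.symm)⟩

def IsFunctional (G : MG) : Prop :=
  ∀ v ∈ G.V, #(G.edgesWithin (G.comp v)) = #(G.comp v)

lemma WF.spanning_mem_subPairs (hG : G.WF) {S : Finset ℕ} (hS : S ⊆ G.E) :
    (G.V, S) ∈ G.subPairs :=
  mem_filter.2
    ⟨mem_product.2 ⟨mem_powerset_self _, mem_powerset.2 hS⟩, fun e he => hG e (hS he)⟩

lemma funcCount_eq_card_powerset (hG : G.WF) (k₀ : ℕ) :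
    G.funcCount k₀ = #(G.E.powerset.filter fun S =>
      (G.sub (G.V, S)).k = k₀ ∧ (G.sub (G.V, S)).IsFunctional) := by
  refine card_nbij' Prod.snd (fun S => (G.V, S)) ?_ ?_ ?_ ?_
  · rintro ⟨W, S⟩ hp
    simp only [coe_filter, Set.mem_ofPred_eq, subPairs, mem_filter, mem_product,
      mem_powerset] at hp ⊢
    obtain ⟨⟨⟨-, hS⟩, -⟩, rfl, hk, hfun⟩ := hp
    exact ⟨hS, hk, hfun⟩
  · intro S hS
    simp only [coe_filter, Set.mem_ofPred_eq, mem_powerset] at hS ⊢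
    exact ⟨hG.spanning_mem_subPairs hS.1, trivial, hS.2⟩
  · rintro ⟨W, S⟩ hp
    simp only [coe_filter, Set.mem_ofPred_eq] at hp
    rw [hp.2.1]
  · intro S _
    rfl

lemma WF.delE (hG : G.WF) (e : ℕ) : (G.delE e).WF :=
  fun e' he' => hG e' (mem_of_mem_erase he')

variable {e u v : ℕ}

lemma WF.contract (hG : G.WF) (he : e ∈ G.E) (hφ : G.φ e = s(u, v)) (huv : u ≠ v) :
    (G.contract e u v).WF := by
  intro e' he' y hy
  obtain ⟨x, hx, rfl⟩ := Sym2.mem_map.1 hy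
  split_ifs with hxu
  · exact mem_erase.2 ⟨huv.symm, hG e he v (by simp [hφ])⟩
  · exact mem_erase.2 ⟨hxu, hG e' (mem_of_mem_erase he') x hx⟩

lemma reach_contract_of_reach (hφ : H.φ e = s(u, v)) {x y : ℕ} (h : H.Reach x y) :
    (H.contract e u v).Reach (if x = u then v else x) (if y = u then v else y) := by
  induction h with
  | refl => exact .refl
  | @tail y z _ hyz ih =>
    refine ih.trans ?_
    obtain ⟨e', he', hφ'⟩ := hyz
    by_cases hee : e' = e
    · subst hee
      rcases Sym2.eq_iff.1 (hφ'.symm.trans hφ) with ⟨rfl, rfl⟩ | ⟨rfl, rfl⟩ <;>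
        simp [Reach, Relation.ReflTransGen.refl]
    · exact Adj.reach ⟨e', mem_erase.2 ⟨hee, he'⟩, by simp [contract, hφ']⟩

lemma reach_of_reach_contract (he : e ∈ H.E) (hφ : H.φ e = s(u, v)) {x y : ℕ}
    (h : (H.contract e u v).Reach x y) : H.Reach x y := by
  have hπ : ∀ x, H.Reach (if x = u then v else x) x := fun x => by
    split_ifs with hx
    · exact (Adj.reach ⟨e, he, hx ▸ hφ⟩).symm
    · exact .refl
  induction h with
  | refl => exact .refl
  | @tail y z _ hyz ih =>
    refine ih.trans ?_
    obtain ⟨e', he', hφ'⟩ := hyz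
    induction hp : H.φ e' using Sym2.inductionOn with
    | _ p q =>
    change Sym2.map _ (H.φ e') = _ at hφ'
    rw [hp, Sym2.map_mk] at hφ'
    have hpq : H.Reach (if p = u then v else p) (if q = u then v else q) :=
      (hπ p).trans ((Adj.reach ⟨e', mem_of_mem_erase he', hp⟩).trans (hπ q).symm)
    rcases Sym2.eq_iff.1 hφ' with ⟨rfl, rfl⟩ | ⟨rfl, rfl⟩
    exacts [hpq, hpq.symm]

lemma comp_contract (he : e ∈ H.E) (hφ : H.φ e = s(u, v)) {w : ℕ} (hw : w ≠ u) :
    (H.contract e u v).comp w = (H.comp w).erase u := by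
  ext z
  simp only [mem_comp, show (H.contract e u v).V = H.V.erase u from rfl, mem_erase]
  refine ⟨fun ⟨⟨hzu, hz⟩, hr⟩ => ⟨hzu, hz, reach_of_reach_contract he hφ hr⟩,
    fun ⟨hzu, hz, hr⟩ => ⟨⟨hzu, hz⟩, ?_⟩⟩
  simpa [hw, hzu] using reach_contract_of_reach hφ hr

lemma k_contract (he : e ∈ H.E) (hφ : H.φ e = s(u, v)) (huv : u ≠ v) (hu : u ∈ H.V)
    (hv : v ∈ H.V) : (H.contract e u v).k = H.k := by
  have hreach : H.Reach u v := Adj.reach ⟨e, he, hφ⟩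
  have hcomps : (H.V.erase u).image H.comp = H.V.image H.comp := by
    refine (image_subset_image (erase_subset u H.V)).antisymm fun C hC => ?_
    obtain ⟨x, hx, rfl⟩ := mem_image.1 hC
    by_cases hxu : x = u
    · rw [hxu, comp_eq_of_reach hreach]
      exact mem_image_of_mem _ (mem_erase.2 ⟨huv.symm, hv⟩)
    · exact mem_image_of_mem _ (mem_erase.2 ⟨hxu, hx⟩)
  have hinj : Set.InjOn (fun C => C.erase u) (H.V.image H.comp : Set (Finset ℕ)) := by
    simp only [coe_image, Set.InjOn, Set.mem_image, mem_coe]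
    rintro _ ⟨x₁, -, rfl⟩ _ ⟨x₂, -, rfl⟩ h
    have hmem : ∀ x, u ∈ H.comp x ↔ v ∈ (H.comp x).erase u := fun x => by
      rw [mem_erase, mem_comp_iff_of_reach hu hv hreach, and_iff_right huv.symm]
    have hu₁₂ : u ∈ H.comp x₁ ↔ u ∈ H.comp x₂ := by simp only [hmem, h]
    by_cases hu₁ : u ∈ H.comp x₁
    · exact erase_injOn' u hu₁ (hu₁₂.1 hu₁) h
    · rwa [erase_eq_of_notMem hu₁, erase_eq_of_notMem (hu₁₂.not.1 hu₁)] at h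
  calc (H.contract e u v).k
      = #(((H.V.erase u).image H.comp).image fun C => C.erase u) := by
        rw [image_image]
        exact congrArg card (image_congr fun w hw => comp_contract he hφ (mem_erase.1 hw).1)
    _ = H.k := by rw [hcomps, card_image_of_injOn hinj, k]

lemma edgesWithin_contract_erase (huv : u ≠ v) {C : Finset ℕ} (hu : u ∈ C) (hv : v ∈ C) :
    (H.contract e u v).edgesWithin (C.erase u) = (H.edgesWithin C).erase e := by
  ext e'
  simp only [edgesWithin, contract, mem_filter, mem_erase, Sym2.mem_map, forall_exists_index,
    and_imp, forall_apply_eq_imp_iff₂]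
  rw [and_assoc]
  refine and_congr_right fun _ => and_congr_right fun _ => forall₂_congr fun x _ => ?_
  by_cases hxu : x = u <;> simp [hxu, huv.symm, hu, hv]

lemma edgesWithin_contract_of_notMem (hφ : H.φ e = s(u, v)) {C : Finset ℕ} (hu : u ∉ C)
    (hv : v ∉ C) : (H.contract e u v).edgesWithin C = H.edgesWithin C := by
  ext e'
  simp only [edgesWithin, contract, mem_filter, mem_erase, Sym2.mem_map, forall_exists_index,
    and_imp, forall_apply_eq_imp_iff₂]
  have hcond : ∀ x, ((if x = u then v else x) ∈ C ↔ x ∈ C) := fun x => by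
    by_cases hxu : x = u <;> simp [hxu, hu, hv]
  simp only [hcond, and_congr_left_iff, and_iff_right_iff_imp]
  rintro hin - rfl
  exact hu (hin u (by simp [hφ]))

lemma isFunctional_contract (he : e ∈ H.E) (hφ : H.φ e = s(u, v)) (huv : u ≠ v)
    (hu : u ∈ H.V) (hv : v ∈ H.V) : (H.contract e u v).IsFunctional ↔ H.IsFunctional := by
  have hreach : H.Reach u v := Adj.reach ⟨e, he, hφ⟩
  have hat : ∀ w, w ≠ u →
      (#((H.contract e u v).edgesWithin ((H.contract e u v).comp w)) =
          #((H.contract e u v).comp w) ↔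
        #(H.edgesWithin (H.comp w)) = #(H.comp w)) := by
    intro w hw
    rw [comp_contract he hφ hw]
    by_cases huC : u ∈ H.comp w
    · have hvC := (mem_comp_iff_of_reach hu hv hreach).1 huC
      have heC : e ∈ H.edgesWithin (H.comp w) :=
        mem_filter.2 ⟨he, fun x hx => by
          rcases Sym2.mem_iff.1 (hφ ▸ hx) with rfl | rfl <;> assumption⟩
      rw [edgesWithin_contract_erase huv huC hvC, card_erase_of_mem heC, card_erase_of_mem huC]
      have := card_pos.2 ⟨e, heC⟩
      have := card_pos.2 ⟨u, huC⟩
      omega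
    · have hvC := (mem_comp_iff_of_reach hu hv hreach).not.1 huC
      rw [erase_eq_of_notMem huC, edgesWithin_contract_of_notMem hφ huC hvC]
  refine ⟨fun h w hw => ?_,
    fun h w hw => (hat w (mem_erase.1 hw).1).2 (h w (mem_of_mem_erase hw))⟩
  by_cases hwu : w = u
  · rw [hwu, comp_eq_of_reach hreach, ← hat v huv.symm]
    exact h v (mem_erase.2 ⟨huv.symm, hv⟩)
  · exact (hat w hwu).1 (h w (mem_erase.2 ⟨hwu, hw⟩))

lemma funcCount_eq_delE_add_contract (hG : G.WF) (he : e ∈ G.E) (hφ : G.φ e = s(u, v))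
    (huv : u ≠ v) (k₀ : ℕ) :
    G.funcCount k₀ = (G.delE e).funcCount k₀ + (G.contract e u v).funcCount k₀ := by
  have hu : u ∈ G.V := hG e he u (by simp [hφ])
  have hv : v ∈ G.V := hG e he v (by simp [hφ])
  have hcontract : ∀ S ⊆ G.E.erase e,
      (G.contract e u v).sub ((G.contract e u v).V, S) =
        (G.sub (G.V, insert e S)).contract e u v :=
    fun S hS => by
      rw [contract, contract, sub, sub, erase_insert fun h => (mem_erase.1 (hS h)).1 rfl]
  rw [funcCount_eq_card_powerset hG, funcCount_eq_card_powerset (hG.delE e),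
    funcCount_eq_card_powerset (hG.contract he hφ huv), ← insert_erase he,
    card_filter, sum_powerset_insert (notMem_erase e G.E), ← card_filter, ← card_filter]
  refine congrArg₂ (· + ·) rfl (congrArg card (filter_congr fun S hS => ?_))
  have heS : e ∈ (G.sub (G.V, insert e S)).E := mem_insert_self e S
  rw [hcontract S (mem_powerset.1 hS), k_contract heS hφ huv hu hv,
    isFunctional_contract heS hφ huv hu hv]

def AllLoops (G : MG) : Prop := ∀ e ∈ G.E, (G.φ e).IsDiag

def loopsAt (G : MG) (v : ℕ) : Finset ℕ := G.E.filter (G.φ · = Sym2.diag v)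

lemma mem_loopsAt : e ∈ G.loopsAt v ↔ e ∈ G.E ∧ G.φ e = Sym2.diag v := mem_filter

lemma AllLoops.exists_eq_diag (hL : G.AllLoops) (he : e ∈ G.E) : ∃ a, G.φ e = Sym2.diag a :=
  ⟨_, (Sym2.diag_diagElem (hL e he)).symm⟩

lemma AllLoops.reach_eq (hL : G.AllLoops) {x y : ℕ} (h : G.Reach x y) : x = y := by
  induction h with
  | refl => rfl
  | tail _ hyz ih =>
    obtain ⟨e, he, hφ⟩ := hyz
    have := hL e he
    rw [hφ, Sym2.mk_isDiag_iff] at this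
    exact ih.trans this

lemma AllLoops.comp_eq (hL : G.AllLoops) (hv : v ∈ G.V) : G.comp v = {v} := by
  ext w
  simp only [mem_comp, mem_singleton]
  exact ⟨fun ⟨_, h⟩ => (hL.reach_eq h).symm, by rintro rfl; exact ⟨hv, .refl⟩⟩

lemma AllLoops.k_eq (hL : G.AllLoops) : G.k = #G.V := by
  rw [k, image_congr fun v hv => hL.comp_eq hv, card_image_of_injective _ singleton_injective]

lemma AllLoops.isFunctional_iff (hL : G.AllLoops) :
    G.IsFunctional ↔ ∀ v ∈ G.V, #(G.loopsAt v) = 1 := by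
  refine forall₂_congr fun v hv => ?_
  rw [hL.comp_eq hv, card_singleton, edgesWithin, loopsAt]
  congr! 3 with e he
  obtain ⟨a, ha⟩ := hL.exists_eq_diag he
  simp [ha, Sym2.diag]

lemma funcCount_of_allLoops (hG : G.WF) (hL : G.AllLoops) (k₀ : ℕ) :
    G.funcCount k₀ = if k₀ = #G.V then ∏ v ∈ G.V, #(G.loopsAt v) else 0 := by
  have hsub : ∀ S ⊆ G.E, (G.sub (G.V, S)).AllLoops := fun S hS e he => hL e (hS he)
  rw [funcCount_eq_card_powerset hG]
  split_ifs with hk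
  · have hdiag : ∀ e ∈ G.E, G.φ e ∈ G.V.image Sym2.diag := fun e he => by
      obtain ⟨a, ha⟩ := hL.exists_eq_diag he
      exact ha ▸ mem_image_of_mem _ (hG e he a (by simp [ha, Sym2.diag]))
    have hprod : ∏ v ∈ G.V, #(G.loopsAt v) =
        ∏ d ∈ G.V.image Sym2.diag, #(G.E.filter (G.φ · = d)) :=
      (prod_image (f := fun d => #(G.E.filter (G.φ · = d)))
        fun a _ b _ h => Sym2.diag_injective h).symm
    rw [hprod, ← card_transversals hdiag]
    refine congrArg card (filter_congr fun S hS => ?_)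
    rw [(hsub S (mem_powerset.1 hS)).k_eq, (hsub S (mem_powerset.1 hS)).isFunctional_iff, hk,
      forall_mem_image]
    exact and_iff_right rfl
  · refine card_eq_zero.2 (filter_eq_empty_iff.2 fun S hS h => hk ?_)
    rw [← h.1, (hsub S (mem_powerset.1 hS)).k_eq]
    rfl

lemma iso_emp (hG : G.WF) (hV : G.V = ∅) : G.Iso emp := by
  have hE : G.E = ∅ := eq_empty_of_forall_notMem fun e he =>
    notMem_empty _ (hV ▸ hG e he _ (Sym2.out_fst_mem _))
  refine ⟨id, id, ?_, ?_, fun e he => absurd he (hE ▸ notMem_empty e)⟩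
  · simp [hV, emp]
  · simp [hE, emp]

lemma iso_K1 (hV : G.V = {v}) (hE : ∀ e ∈ G.E, G.φ e = Sym2.diag v) : G.Iso (K1 #G.E) := by
  obtain ⟨g, hg⟩ := (finite_toSet G.E).exists_bijOn_of_encard_eq
    (t := ((K1 #G.E).E : Set ℕ)) (by simp only [Set.encard_coe_eq_coe_finsetCard, K1, card_range])
  refine ⟨fun _ => 0, g, by simp [hV, K1], hg, fun e he => ?_⟩
  rw [hE e he]
  rfl

lemma eq_disjUnion_sdiff {W A : Finset ℕ} (hW : W ⊆ G.V) (hA : A ⊆ G.E) :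
    G = disjUnion ⟨W, A, G.φ⟩ ⟨G.V \ W, G.E \ A, G.φ⟩ := by
  simp only [disjUnion, union_sdiff_of_subset hW, union_sdiff_of_subset hA, ite_self]

def eraseLoopVertex (G : MG) (a : ℕ) : MG := ⟨G.V \ {a}, G.E \ G.loopsAt a, G.φ⟩

lemma loopsAt_eraseLoopVertex {a w : ℕ} (hwa : w ≠ a) :
    (G.eraseLoopVertex a).loopsAt w = G.loopsAt w := by
  ext e
  simp only [mem_loopsAt, eraseLoopVertex, mem_sdiff]
  exact ⟨fun ⟨⟨he, _⟩, h⟩ => ⟨he, h⟩,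
    fun ⟨he, h⟩ => ⟨⟨he, fun h' => hwa (Sym2.diag_injective (h.symm.trans h'.2))⟩, h⟩⟩

lemma AllLoops.eraseLoopVertex (hL : G.AllLoops) (a : ℕ) : (G.eraseLoopVertex a).AllLoops :=
  fun e he => hL e (mem_sdiff.1 he).1

lemma WF.eraseLoopVertex (hG : G.WF) (hL : G.AllLoops) (a : ℕ) : (G.eraseLoopVertex a).WF := by
  intro e he x hx
  obtain ⟨heE, hea⟩ := mem_sdiff.1 he
  obtain ⟨b, hb⟩ := hL.exists_eq_diag heE
  have hxb : x = b := by
    change x ∈ G.φ e at hx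
    simpa [hb, Sym2.diag] using hx
  refine mem_sdiff.2 ⟨hG e heE x hx, fun hxa => hea (mem_loopsAt.2 ⟨heE, ?_⟩)⟩
  rw [hb, ← hxb, mem_singleton.1 hxa]

lemma F_of_allLoops (F : MG → ℤ[X])
    (hIso : ∀ G H : MG, G.Iso H → F G = F H)
    (hMul : ∀ G₁ G₂ : MG, Disjoint G₁.V G₂.V → Disjoint G₁.E G₂.E →
      F (disjUnion G₁ G₂) = F G₁ * F G₂)
    (hK1 : ∀ n : ℕ, F (K1 n) = (n : ℤ[X]) * X)
    (hEmp : F emp = 1) (hG : G.WF) (hL : G.AllLoops) :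
    F G = ∏ v ∈ G.V, (#(G.loopsAt v) : ℤ[X]) * X := by
  obtain ⟨V, hV⟩ : ∃ V, G.V = V := ⟨_, rfl⟩
  induction V using Finset.induction_on generalizing G with
  | empty => rw [hIso G emp (iso_emp hG hV), hEmp, hV, prod_empty]
  | insert a s ha ih =>
    set R := G.eraseLoopVertex a
    have hRV : R.V = s := by
      rw [show R.V = G.V \ {a} from rfl, hV, insert_sdiff_of_mem _ (mem_singleton_self a),
        sdiff_singleton_eq_erase, erase_eq_of_notMem ha]
    have hloops : (⟨{a}, G.loopsAt a, G.φ⟩ : MG).Iso (K1 #(G.loopsAt a)) :=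
      iso_K1 rfl fun e he => (mem_loopsAt.1 he).2
    calc F G = F (disjUnion ⟨{a}, G.loopsAt a, G.φ⟩ R) :=
          congrArg F (eq_disjUnion_sdiff (by simp [hV]) (filter_subset _ _))
      _ = (#(G.loopsAt a) : ℤ[X]) * X * ∏ w ∈ s, (#(R.loopsAt w) : ℤ[X]) * X := by
          rw [hMul _ _ disjoint_sdiff disjoint_sdiff, hIso _ _ hloops, hK1,
            ih (hG.eraseLoopVertex hL a) (hL.eraseLoopVertex a) hRV, hRV]
      _ = ∏ v ∈ G.V, (#(G.loopsAt v) : ℤ[X]) * X := by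
          rw [hV, prod_insert ha, prod_congr rfl fun w hw =>
            by rw [loopsAt_eraseLoopVertex (ne_of_mem_of_not_mem hw ha)]]

lemma exists_nonloop_of_not_allLoops (hL : ¬ G.AllLoops) :
    ∃ e ∈ G.E, ∃ u v, G.φ e = s(u, v) ∧ u ≠ v := by
  obtain ⟨e, he, hnd⟩ := not_forall₂.1 hL
  induction h : G.φ e using Sym2.inductionOn with
  | _ u v => exact ⟨e, he, u, v, h, by rwa [h, Sym2.mk_isDiag_iff] at hnd⟩

end MG

open Polynomial in
/-- `F` stands for J(G, 0, 1, 0, 0, s, 1), which is determined by the specialized defining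
relations: F(G) = F(G−uv) + F(G/uv) on non-loop edges, multiplicativity, F(K₁ⁿ) = n·s and
F(∅) = 1. -/
theorem J_counts_spanning_functional (F : MG → Polynomial ℤ)
    (hIso : ∀ G H : MG, MG.Iso G H → F G = F H)
    (hRec : ∀ (G : MG) (e u v : ℕ), e ∈ G.E → G.φ e = s(u, v) → u ≠ v →
      F G = F (G.delE e) + F (G.contract e u v))
    (hMul : ∀ G₁ G₂ : MG, Disjoint G₁.V G₂.V → Disjoint G₁.E G₂.E →
      F (MG.disjUnion G₁ G₂) = F G₁ * F G₂)
    (hK1 : ∀ n : ℕ, F (MG.K1 n) = (n : Polynomial ℤ) * X)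
    (hEmp : F MG.emp = 1) :
    ∀ (G : MG), G.WF → ∀ k : ℕ, (F G).coeff k = G.funcCount k := by
  intro G
  induction hn : G.E.card using Nat.strong_induction_on generalizing G with
  | _ n ih =>
  intro hG k
  by_cases hL : G.AllLoops
  · rw [MG.F_of_allLoops F hIso hMul hK1 hEmp hG hL, MG.funcCount_of_allLoops hG hL,
      Finset.prod_mul_distrib, Finset.prod_const, ← Nat.cast_prod, ← C_eq_natCast,
      coeff_C_mul_X_pow]
    split_ifs <;> simp
  · obtain ⟨e, he, u, v, hφ, huv⟩ := MG.exists_nonloop_of_not_allLoops hL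
    have hlt : (G.E.erase e).card < n := hn ▸ Finset.card_erase_lt_of_mem he
    rw [hRec G e u v he hφ huv, coeff_add, ih _ hlt (G.delE e) rfl (hG.delE e),
      ih _ hlt _ rfl (hG.contract he hφ huv), MG.funcCount_eq_delE_add_contract hG he hφ huv,
      Nat.cast_add]
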